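/- The function H(w,z) = z₁z₂ + z₁z₃ + z₂z₃ − w₂² + 2w₁w₃ − w₃² is a first integral of the system ẇ₁ = (1/2)z₁(w₁+w₂) + (1/2)z₂(w₁−w₂), ẇ₂ = (1/2)z₁(w₁+w₂) − (1/2)z₂(w₁−w₂), ẇ₃ = z₃w₃, ż₁ = (w₃−w₁)(w₂+w₃), ż₂ = (w₃−w₂)(w₃−w₁), ż₃ = (w₃+w₂)(w₂−w₃); i.e., the Lie derivative of H along this vector field vanishes identically on ℝ⁶. -/
import Mathlib


open MvPolynomial

/-- Variables: `0,1,2` are `w₁,w₂,w₃` and `3,4,5` are `z₁,z₂,z₃`. -/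
noncomputable def bianchiHW : MvPolynomial (Fin 6) ℝ :=
  X 3 * X 4 + X 3 * X 5 + X 4 * X 5 - (X 1)^2 + 2 * X 0 * X 2 - (X 2)^2

/-- The components of the vector field in `(w, z)` variables. -/
noncomputable def bianchiWZdot : Fin 6 → MvPolynomial (Fin 6) ℝ :=
  ![MvPolynomial.C (1/2 : ℝ) * X 3 * (X 0 + X 1) + MvPolynomial.C (1/2 : ℝ) * X 4 * (X 0 - X 1),
    MvPolynomial.C (1/2 : ℝ) * X 3 * (X 0 + X 1) - MvPolynomial.C (1/2 : ℝ) * X 4 * (X 0 - X 1),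
    X 5 * X 2,
    (X 2 - X 0) * (X 1 + X 2),
    (X 2 - X 1) * (X 2 - X 0),
    (X 2 + X 1) * (X 1 - X 2)]

lemma pd_bianchiHW_0 : pderiv (0 : Fin 6) bianchiHW = 2 * X 2 := by
  have h2 : (2 : MvPolynomial (Fin 6) ℝ) = C 2 := (map_ofNat C 2).symm
  simp [bianchiHW, h2, pderiv_X_self, pderiv_X_of_ne, pderiv_C, mul_comm]
  try ring

lemma pd_bianchiHW_1 : pderiv (1 : Fin 6) bianchiHW = -(2 * X 1) := by
  have h2 : (2 : MvPolynomial (Fin 6) ℝ) = C 2 := (map_ofNat C 2).symm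
  simp [bianchiHW, h2, pderiv_X_self, pderiv_X_of_ne, pderiv_C, mul_comm]
  try ring

lemma pd_bianchiHW_2 : pderiv (2 : Fin 6) bianchiHW = 2 * X 0 - 2 * X 2 := by
  have h2 : (2 : MvPolynomial (Fin 6) ℝ) = C 2 := (map_ofNat C 2).symm
  simp [bianchiHW, h2, pderiv_X_self, pderiv_X_of_ne, pderiv_C, mul_comm]
  try ring

lemma pd_bianchiHW_3 : pderiv (3 : Fin 6) bianchiHW = X 4 + X 5 := by
  have h2 : (2 : MvPolynomial (Fin 6) ℝ) = C 2 := (map_ofNat C 2).symm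
  simp [bianchiHW, h2, pderiv_X_self, pderiv_X_of_ne, pderiv_C, mul_comm]
  try ring

lemma pd_bianchiHW_4 : pderiv (4 : Fin 6) bianchiHW = X 3 + X 5 := by
  have h2 : (2 : MvPolynomial (Fin 6) ℝ) = C 2 := (map_ofNat C 2).symm
  simp [bianchiHW, h2, pderiv_X_self, pderiv_X_of_ne, pderiv_C, mul_comm]
  try ring

lemma pd_bianchiHW_5 : pderiv (5 : Fin 6) bianchiHW = X 3 + X 4 := by
  have h2 : (2 : MvPolynomial (Fin 6) ℝ) = C 2 := (map_ofNat C 2).symm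
  simp [bianchiHW, h2, pderiv_X_self, pderiv_X_of_ne, pderiv_C, mul_comm]
  try ring

theorem stmt_12 :
    ∑ i : Fin 6, pderiv i bianchiHW * bianchiWZdot i = 0 := by
  have e0 : bianchiWZdot 0 = C (1/2 : ℝ) * X 3 * (X 0 + X 1) + C (1/2 : ℝ) * X 4 * (X 0 - X 1) := rfl
  have e1 : bianchiWZdot 1 = C (1/2 : ℝ) * X 3 * (X 0 + X 1) - C (1/2 : ℝ) * X 4 * (X 0 - X 1) := rfl
  have e2 : bianchiWZdot 2 = X 5 * X 2 := rfl
  have e3 : bianchiWZdot 3 = (X 2 - X 0) * (X 1 + X 2) := rfl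
  have e4 : bianchiWZdot 4 = (X 2 - X 1) * (X 2 - X 0) := rfl
  have e5 : bianchiWZdot 5 = (X 2 + X 1) * (X 1 - X 2) := rfl
  have hC : (C (1/2 : ℝ) : MvPolynomial (Fin 6) ℝ) + C (1/2 : ℝ) = 1 := by
    rw [← C_add]; norm_num
  rw [Fin.sum_univ_six, e0, e1, e2, e3, e4, e5,
    pd_bianchiHW_0, pd_bianchiHW_1, pd_bianchiHW_2, pd_bianchiHW_3, pd_bianchiHW_4, pd_bianchiHW_5]
  linear_combination (X 2 * X 3 * X 0 + X 2 * X 3 * X 1 + X 2 * X 4 * X 0 - X 2 * X 4 * X 1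
    - X 1 * X 3 * X 0 - X 1 * X 3 * X 1 + X 1 * X 4 * X 0 - X 1 * X 4 * X 1) * hC
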